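/- Let 0 ≤ β < 1, ε > 0, d ≥ 1, and ω a fixed sequence in {-1,1}^ℕ. Define Z_N(ω) = Σ_{l=1}^{N} Σ_{0=i_0<i_1<...<i_l=N} ε^{l-1} (2π)^{-dl/2} ∏_{j=1}^{l} [∏_{n=i_{j-1}}^{i_j-1}(1+βω_n) · Σ_{n=i_{j-1}}^{i_j-1}(1+βω_n)^{-1}]^{-d/2}. Then for all 0 < M < N: Z_N(ω) ≥ Z_M(ω) · ε · Z_{N-M}(θ^M ω), where θ is the shift (θ^M ω)_n = ω_{M+n}. -/

import Mathlib

open Finset Real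

open scoped Classical

/-- Combinatorial expansion of the gradient pinning partition function:
the sum runs over the number `l` of excursions and over the increasing
sequences `0 = i₀ < i₁ < ⋯ < i_l = N` of pinned sites. -/
noncomputable def gradPinningZ (d : ℕ) (β ε : ℝ) (ω : ℕ → ℝ) (N : ℕ) : ℝ :=
  ∑ l ∈ Finset.Icc 1 N,
    ∑ i ∈ Finset.univ.filter (fun i : Fin (l + 1) → Fin (N + 1) =>
        StrictMono i ∧ i 0 = 0 ∧ i (Fin.last l) = Fin.last N),
      ε ^ (l - 1) * (2 * π) ^ (-((d : ℝ) * l) / 2) *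
        ∏ j : Fin l,
          ((∏ n ∈ Finset.Ico (i j.castSucc : ℕ) (i j.succ : ℕ), (1 + β * ω n)) *
              ∑ n ∈ Finset.Ico (i j.castSucc : ℕ) (i j.succ : ℕ),
                (1 + β * ω n)⁻¹) ^ (-(d : ℝ) / 2)

/-!
Write `Z_N` as a sum over pinnings `0 = i₀ < ⋯ < i_l = N` of the weight `ε^(l-1) (2π)^(-dl/2)`
times a product of excursion factors over consecutive pinned sites; all weights are nonnegative
since `1 + β ω_n ≥ 0`. Concatenating a pinning of `[0, M]` with the shift by `M` of a pinning of
`[0, N - M]` is an injective map into the pinnings of `[0, N]` under which weights multiply, up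
to the factor `ε`. Hence `Z_M · ε · Z_{N-M}(θ^M ω)` is the part of `Z_N` coming from pinnings
through `M`.
-/
section PathProd

variable {α R : Type*} [CommMonoid R]

def pathProd (f : α → α → R) {l : ℕ} (p : Fin (l + 1) → α) : R :=
  ∏ j : Fin l, f (p j.castSucc) (p j.succ)

theorem pathProd_split (f : α → α → R) {l₁ l₂ : ℕ} (p : Fin (l₁ + l₂ + 1) → α) :
    pathProd f p = pathProd f (fun t : Fin (l₁ + 1) => p (Fin.castLE (by omega) t)) *
      pathProd f (fun t : Fin (l₂ + 1) => p (Fin.natAdd l₁ t)) := by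
  rw [pathProd, Fin.prod_univ_add]
  rfl

end PathProd

theorem strictMono_of_strictMono_castLE_natAdd {α : Type*} [Preorder α] {l₁ l₂ : ℕ}
    {p : Fin (l₁ + l₂ + 1) → α}
    (h₁ : StrictMono fun t : Fin (l₁ + 1) => p (Fin.castLE (by omega) t))
    (h₂ : StrictMono fun t : Fin (l₂ + 1) => p (Fin.natAdd l₁ t)) :
    StrictMono p := by
  have left (a : Fin (l₁ + l₂ + 1)) (ha : (a : ℕ) ≤ l₁) :
      p a = p (Fin.castLE (by omega) (⟨a, by omega⟩ : Fin (l₁ + 1))) := rfl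
  have right (a : Fin (l₁ + l₂ + 1)) (ha : l₁ ≤ (a : ℕ)) :
      p a = p (Fin.natAdd l₁ (⟨a - l₁, by omega⟩ : Fin (l₂ + 1))) :=
    congrArg p (Fin.ext (by simp; omega))
  intro a b hab
  rw [Fin.lt_def] at hab
  by_cases hb : (b : ℕ) ≤ l₁
  · rw [left a (by omega), left b hb]
    exact h₁ (Fin.mk_lt_mk.mpr hab)
  by_cases ha : l₁ ≤ (a : ℕ)
  · rw [right a ha, right b (by omega)]
    exact h₂ (Fin.mk_lt_mk.mpr (by omega))
  · calc p a < p ⟨l₁, by omega⟩ := by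
          rw [left a (by omega), left ⟨l₁, by omega⟩ le_rfl]
          exact h₁ (Fin.mk_lt_mk.mpr (by simp; omega))
      _ < p b := by
          rw [right ⟨l₁, by omega⟩ le_rfl, right b (by omega)]
          exact h₂ (Fin.mk_lt_mk.mpr (by simp; omega))

def pinnings (N : ℕ) : Finset (Σ l : ℕ, Fin (l + 1) → Fin (N + 1)) :=
  (Icc 1 N).sigma fun l => univ.filter fun i : Fin (l + 1) → Fin (N + 1) =>
    StrictMono i ∧ i 0 = 0 ∧ i (Fin.last l) = Fin.last N

theorem mem_pinnings {N l : ℕ} {i : Fin (l + 1) → Fin (N + 1)} :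
    ⟨l, i⟩ ∈ pinnings N ↔
      (1 ≤ l ∧ l ≤ N) ∧ StrictMono i ∧ i 0 = 0 ∧ i (Fin.last l) = Fin.last N := by
  simp [pinnings]

noncomputable def excursionWeight (d : ℕ) (β : ℝ) (ω : ℕ → ℝ) (a b : ℕ) : ℝ :=
  ((∏ n ∈ Ico a b, (1 + β * ω n)) * ∑ n ∈ Ico a b, (1 + β * ω n)⁻¹) ^ (-(d : ℝ) / 2)

theorem excursionWeight_add_add (d : ℕ) (β : ℝ) (ω : ℕ → ℝ) (M a b : ℕ) :
    excursionWeight d β ω (M + a) (M + b) = excursionWeight d β (fun n => ω (M + n)) a b := by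
  rw [excursionWeight, excursionWeight, add_comm M a, add_comm M b, ← prod_Ico_add,
    ← sum_Ico_add]

theorem excursionWeight_nonneg {d : ℕ} {β : ℝ} {ω : ℕ → ℝ} (hω : ∀ n, 0 ≤ 1 + β * ω n)
    (a b : ℕ) : 0 ≤ excursionWeight d β ω a b :=
  rpow_nonneg (mul_nonneg (prod_nonneg fun n _ => hω n)
    (sum_nonneg fun n _ => inv_nonneg.mpr (hω n))) _

noncomputable def pinningWeight (d : ℕ) (β ε : ℝ) (ω : ℕ → ℝ) {N : ℕ}
    (x : Σ l : ℕ, Fin (l + 1) → Fin (N + 1)) : ℝ :=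
  ε ^ (x.1 - 1) * (2 * π) ^ (-((d : ℝ) * x.1) / 2) *
    pathProd (excursionWeight d β ω) fun t => (x.2 t : ℕ)

theorem gradPinningZ_eq_sum_pinningWeight (d : ℕ) (β ε : ℝ) (ω : ℕ → ℝ) (N : ℕ) :
    gradPinningZ d β ε ω N = ∑ x ∈ pinnings N, pinningWeight d β ε ω x := by
  rw [gradPinningZ, pinnings, sum_sigma]
  rfl

theorem pinningWeight_nonneg {d : ℕ} {β ε : ℝ} {ω : ℕ → ℝ} (hε : 0 ≤ ε)
    (hω : ∀ n, 0 ≤ 1 + β * ω n) {N : ℕ} (x : Σ l : ℕ, Fin (l + 1) → Fin (N + 1)) :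
    0 ≤ pinningWeight d β ε ω x :=
  mul_nonneg (by positivity) (prod_nonneg fun _ _ => excursionWeight_nonneg hω _ _)

/-- The two pinnings share the site `M`: the last entry of `i` is dropped and `j` is shifted
by `M`. -/
def pinConcat {M N : ℕ} (hMN : M ≤ N) {l₁ l₂ : ℕ} (i : Fin (l₁ + 1) → Fin (M + 1))
    (j : Fin (l₂ + 1) → Fin (N - M + 1)) : Fin (l₁ + l₂ + 1) → Fin (N + 1) :=
  Fin.append (m := l₁) (n := l₂ + 1) (fun t : Fin l₁ => Fin.castLE (by omega) (i t.castSucc))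
    fun t => ⟨M + j t, by have := (j t).isLt; omega⟩

section PinConcat

variable {M N : ℕ} (hMN : M ≤ N) {l₁ l₂ : ℕ} {i : Fin (l₁ + 1) → Fin (M + 1)}
  {j : Fin (l₂ + 1) → Fin (N - M + 1)}

theorem pinConcat_natAdd (t : Fin (l₂ + 1)) :
    (pinConcat hMN i j (Fin.natAdd l₁ t) : ℕ) = M + j t := by
  rw [pinConcat, Fin.append_right]

theorem pinConcat_castLE (hil : i (Fin.last l₁) = Fin.last M) (hj0 : j 0 = 0)
    (t : Fin (l₁ + 1)) : (pinConcat hMN i j (Fin.castLE (by omega) t) : ℕ) = i t := by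
  induction t using Fin.lastCases with
  | last =>
    rw [show Fin.castLE _ (Fin.last l₁) = Fin.natAdd l₁ (0 : Fin (l₂ + 1)) from rfl,
      pinConcat_natAdd, hj0, hil]
    simp
  | cast t => exact congrArg Fin.val (Fin.append_left _ _ t)

theorem strictMono_pinConcat (hi : StrictMono i) (hj : StrictMono j)
    (hil : i (Fin.last l₁) = Fin.last M) (hj0 : j 0 = 0) :
    StrictMono (pinConcat hMN i j) := by
  refine strictMono_of_strictMono_castLE_natAdd (fun a b hab => ?_) (fun a b hab => ?_)
  · rw [Fin.lt_def, pinConcat_castLE hMN hil hj0, pinConcat_castLE hMN hil hj0]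
    exact hi hab
  · rw [Fin.lt_def, pinConcat_natAdd, pinConcat_natAdd]
    exact Nat.add_lt_add_left (hj hab) M

theorem card_filter_pinConcat_lt (hmono : StrictMono (pinConcat hMN i j)) (hj0 : j 0 = 0) :
    #{t | (pinConcat hMN i j t : ℕ) < M} = l₁ := by
  have hM : (pinConcat hMN i j (Fin.natAdd l₁ (0 : Fin (l₂ + 1))) : ℕ) = M := by
    rw [pinConcat_natAdd, hj0, Fin.val_zero, add_zero]
  have hfilter : ({t | (pinConcat hMN i j t : ℕ) < M} : Finset _) =
      Iio (Fin.natAdd l₁ (0 : Fin (l₂ + 1))) := by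
    ext t
    rw [mem_filter, mem_Iio, ← hmono.lt_iff_lt, Fin.lt_def, hM]
    simp
  rw [hfilter, Fin.card_Iio]
  simp

end PinConcat

def pinningConcat {M N : ℕ} (hMN : M ≤ N)
    (p : (Σ l : ℕ, Fin (l + 1) → Fin (M + 1)) × (Σ l : ℕ, Fin (l + 1) → Fin (N - M + 1))) :
    Σ l : ℕ, Fin (l + 1) → Fin (N + 1) :=
  ⟨p.1.1 + p.2.1, pinConcat hMN p.1.2 p.2.2⟩

theorem pinningConcat_mem_pinnings {M N : ℕ} (hMN : M ≤ N)
    {p : (Σ l : ℕ, Fin (l + 1) → Fin (M + 1)) × (Σ l : ℕ, Fin (l + 1) → Fin (N - M + 1))}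
    (hp : p ∈ pinnings M ×ˢ pinnings (N - M)) : pinningConcat hMN p ∈ pinnings N := by
  obtain ⟨⟨l₁, i⟩, ⟨l₂, j⟩⟩ := p
  simp only [mem_product, mem_pinnings] at hp
  obtain ⟨⟨⟨hl₁, hl₁M⟩, hi, hi0, hil⟩, ⟨hl₂, hl₂N⟩, hj, hj0, hjl⟩ := hp
  dsimp only [pinningConcat]
  refine mem_pinnings.mpr ⟨⟨by omega, by omega⟩, strictMono_pinConcat hMN hi hj hil hj0, ?_, ?_⟩
  · exact Fin.ext <| (pinConcat_castLE hMN hil hj0 0).trans (by simp [hi0])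
  · refine Fin.ext ?_
    rw [show Fin.last (l₁ + l₂) = Fin.natAdd l₁ (Fin.last l₂) from rfl, pinConcat_natAdd, hjl,
      Fin.val_last, Fin.val_last]
    omega

theorem pinningWeight_pinningConcat (d : ℕ) (β ε : ℝ) (ω : ℕ → ℝ) {M N : ℕ} (hMN : M ≤ N)
    {p : (Σ l : ℕ, Fin (l + 1) → Fin (M + 1)) × (Σ l : ℕ, Fin (l + 1) → Fin (N - M + 1))}
    (hp : p ∈ pinnings M ×ˢ pinnings (N - M)) :
    pinningWeight d β ε ω (pinningConcat hMN p) =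
      pinningWeight d β ε ω p.1 * ε * pinningWeight d β ε (fun n => ω (M + n)) p.2 := by
  obtain ⟨⟨l₁, i⟩, ⟨l₂, j⟩⟩ := p
  simp only [mem_product, mem_pinnings] at hp
  obtain ⟨⟨⟨hl₁, -⟩, -, -, hil⟩, ⟨hl₂, -⟩, -, hj0, -⟩ := hp
  have hpath : pathProd (excursionWeight d β ω) (fun t => (pinConcat hMN i j t : ℕ)) =
      pathProd (excursionWeight d β ω) (fun t => (i t : ℕ)) *
        pathProd (excursionWeight d β fun n => ω (M + n)) (fun t => (j t : ℕ)) := by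
    simp only [pathProd_split, pinConcat_castLE hMN hil hj0, pinConcat_natAdd]
    simp only [pathProd, excursionWeight_add_add]
  have hε : ε ^ (l₁ - 1) * ε * ε ^ (l₂ - 1) = ε ^ (l₁ + l₂ - 1) := by
    rw [← pow_succ, ← pow_add]
    congr 1
    omega
  have hπ : (2 * π) ^ (-((d : ℝ) * l₁) / 2) * (2 * π) ^ (-((d : ℝ) * l₂) / 2) =
      (2 * π) ^ (-((d : ℝ) * (l₁ + l₂ : ℕ)) / 2) := by
    rw [← rpow_add (by positivity)]
    push_cast
    ring_nf
  dsimp only [pinningConcat, pinningWeight]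
  rw [hpath, ← hε, ← hπ]
  ring

theorem pinningConcat_injOn {M N : ℕ} (hMN : M ≤ N) :
    Set.InjOn (pinningConcat hMN) ↑(pinnings M ×ˢ pinnings (N - M)) := by
  rintro ⟨⟨l₁, i⟩, ⟨l₂, j⟩⟩ hp ⟨⟨l₁', i'⟩, ⟨l₂', j'⟩⟩ hq heq
  simp only [coe_product, Set.mem_prod, mem_coe, mem_pinnings] at hp hq
  obtain ⟨⟨_, hi, _, hil⟩, _, hj, hj0, _⟩ := hp
  obtain ⟨⟨_, hi', _, hil'⟩, _, hj', hj0', _⟩ := hq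
  -- `l₁` is recovered from the concatenation as the number of pinned sites below `M`.
  have hl₁ : l₁ = l₁' := by
    let below (x : Σ l : ℕ, Fin (l + 1) → Fin (N + 1)) : ℕ := #{t | (x.2 t : ℕ) < M}
    have h : below (pinningConcat hMN (⟨l₁, i⟩, ⟨l₂, j⟩)) = l₁ :=
      card_filter_pinConcat_lt hMN (strictMono_pinConcat hMN hi hj hil hj0) hj0
    have h' : below (pinningConcat hMN (⟨l₁', i'⟩, ⟨l₂', j'⟩)) = l₁' :=
      card_filter_pinConcat_lt hMN (strictMono_pinConcat hMN hi' hj' hil' hj0') hj0'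
    rw [← h, ← h', heq]
  have hl₂ : l₂ = l₂' := by
    have := congrArg Sigma.fst heq
    simp only [pinningConcat] at this
    omega
  subst hl₁ hl₂
  have hc : pinConcat hMN i j = pinConcat hMN i' j' := by
    simpa [pinningConcat] using heq
  have hii : i = i' := funext fun t => Fin.ext <| by
    rw [← pinConcat_castLE hMN hil hj0, hc, pinConcat_castLE hMN hil' hj0']
  have hjj : j = j' := funext fun t => Fin.ext <| by
    have := congrArg (fun g => (g (Fin.natAdd l₁ t) : ℕ)) hc
    simpa only [pinConcat_natAdd, Nat.add_left_cancel_iff] using this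
  rw [hii, hjj]

theorem gradPinningZ_superadditive_general (d : ℕ) (β ε : ℝ)
    (hβ0 : 0 ≤ β) (hβ1 : β < 1) (hε : 0 < ε)
    (ω : ℕ → ℝ) (hω : ∀ n, ω n = 1 ∨ ω n = -1)
    (M N : ℕ) (hMN : M < N) :
    gradPinningZ d β ε ω N
      ≥ gradPinningZ d β ε ω M * ε *
          gradPinningZ d β ε (fun n => ω (M + n)) (N - M) := by
  have hpos (n : ℕ) : 0 ≤ 1 + β * ω n := by rcases hω n with h | h <;> rw [h] <;> linarith
  simp only [gradPinningZ_eq_sum_pinningWeight, ge_iff_le]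
  calc (∑ x ∈ pinnings M, pinningWeight d β ε ω x) * ε *
        ∑ y ∈ pinnings (N - M), pinningWeight d β ε (fun n => ω (M + n)) y
      = ∑ p ∈ pinnings M ×ˢ pinnings (N - M), pinningWeight d β ε ω (pinningConcat hMN.le p) := by
        rw [sum_mul, sum_mul_sum, ← sum_product']
        exact sum_congr rfl fun p hp => (pinningWeight_pinningConcat d β ε ω hMN.le hp).symm
    _ = ∑ y ∈ (pinnings M ×ˢ pinnings (N - M)).image (pinningConcat hMN.le),
          pinningWeight d β ε ω y := (sum_image (pinningConcat_injOn hMN.le)).symm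
    _ ≤ ∑ y ∈ pinnings N, pinningWeight d β ε ω y :=
        sum_le_sum_of_subset_of_nonneg
          (image_subset_iff.mpr fun _ hp => pinningConcat_mem_pinnings hMN.le hp)
          fun y _ _ => pinningWeight_nonneg hε.le hpos y

/-- Superadditivity of the gradient pinning partition function: restricting to
configurations pinned at `M` gives `Z_N(ω) ≥ Z_M(ω) · ε · Z_{N-M}(θ^M ω)`. -/
theorem gradPinningZ_superadditive (d : ℕ) (hd : 1 ≤ d) (β ε : ℝ)
    (hβ0 : 0 ≤ β) (hβ1 : β < 1) (hε : 0 < ε)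
    (ω : ℕ → ℝ) (hω : ∀ n, ω n = 1 ∨ ω n = -1)
    (M N : ℕ) (hM : 0 < M) (hMN : M < N) :
    gradPinningZ d β ε ω N
      ≥ gradPinningZ d β ε ω M * ε *
          gradPinningZ d β ε (fun n => ω (M + n)) (N - M) :=
  gradPinningZ_superadditive_general d β ε hβ0 hβ1 hε ω hω M N hMN
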